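/- Let $1 < p < \infty$ and let $w$ be a weight on $\mathbb{R}^n$. Define $[w]_{A_p^{\mathcal{R}}} = \sup_Q w(Q)^{1/p} \frac{\|\chi_Q w^{-1}\|_{L^{p',\infty}(w)}}{|Q|}$ and $\|w\|_{A_p^{\mathcal{R}}} = \sup_Q \sup_{E \subseteq Q} \frac{|E|}{|Q|} \left( \frac{w(Q)}{w(E)} \right)^{1/p}$, where the inner supremum is over measurable subsets $E$ of $Q$ with $|E| > 0$. Then $[w]_{A_p^{\mathcal{R}}} \le \|w\|_{A_p^{\mathcal{R}}} \le p \, [w]_{A_p^{\mathcal{R}}}$. -/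

import Mathlib

open MeasureTheory
open scoped ENNReal

/-- The open axis-parallel cube with lower corner `c` and side length `l` in `ℝⁿ`. -/
def cube (n : ℕ) (c : Fin n → ℝ) (l : ℝ) : Set (Fin n → ℝ) :=
  Set.univ.pi fun i => Set.Ioo (c i) (c i + l)

/-- The weak `L^{p,∞}(μ)` quasi-norm. -/
noncomputable def wkNormMu {X : Type*} [MeasurableSpace X] (μ : Measure X) (p : ℝ)
    (g : X → ℝ) : ℝ≥0∞ :=
  ⨆ (t : ℝ) (_ : 0 < t), ENNReal.ofReal t * μ {x | t < |g x|} ^ (1 / p)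

/-- `[w]_{A_p^𝓡} = sup_Q w(Q)^{1/p} ‖χ_Q w⁻¹‖_{L^{p',∞}(w)} / |Q|`. -/
noncomputable def ApRConst (n : ℕ) (p : ℝ) (w : (Fin n → ℝ) → ℝ) : ℝ≥0∞ :=
  ⨆ (c : Fin n → ℝ) (l : ℝ) (_ : 0 < l),
    (volume.withDensity fun x => ENNReal.ofReal (w x)) (cube n c l) ^ (1 / p) *
      wkNormMu (volume.withDensity fun x => ENNReal.ofReal (w x)) (p / (p - 1))
        ((cube n c l).indicator fun x => (w x)⁻¹) / volume (cube n c l)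

/-- `‖w‖_{A_p^𝓡} = sup_Q sup_{E ⊆ Q, |E| > 0} (|E|/|Q|) (w(Q)/w(E))^{1/p}`. -/
noncomputable def ApRNorm (n : ℕ) (p : ℝ) (w : (Fin n → ℝ) → ℝ) : ℝ≥0∞ :=
  ⨆ (c : Fin n → ℝ) (l : ℝ) (_ : 0 < l) (E : Set (Fin n → ℝ)) (_ : MeasurableSet E)
    (_ : E ⊆ cube n c l) (_ : 0 < volume E),
      volume E / volume (cube n c l) *
        ((∫⁻ x in cube n c l, ENNReal.ofReal (w x)) /
            ∫⁻ x in E, ENNReal.ofReal (w x)) ^ (1 / p)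

/-!
Both inequalities are proved cube by cube, with `g = χ_Q w⁻¹`.
For `‖w‖ ≤ p [w]`: if `E ⊆ Q` then `|E| = ∫_E g dw`, and Kolmogorov's inequality bounds this by
`p ‖g‖_{L^{p',∞}(w)} w(E)^{1/p}`; it follows from the layer-cake formula by bounding
`w(E ∩ {g > t})` by `w(E)` for small `t` and by `(‖g‖/t)^{p'}` for large `t`.
For `[w] ≤ ‖w‖`: on the level set `E = {g > t}` we have `w < 1/t`, so `t w(E) ≤ |E|`, and
`w(Q)^{1/p} t w(E)^{1/p'} = t w(E) (w(Q)/w(E))^{1/p} ≤ |E| (w(Q)/w(E))^{1/p}`.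
-/

open Set

/-- `T = n a^{-1/q}` is where the two bounds `a` and `(n/t)^q` of the distribution function cross;
splitting the layer-cake integral there gives `a T + ∫_T^∞ (n/t)^q dt = p n a^{1/p}`. -/
lemma optimal_truncation_eq {p q a n : ℝ} (hpq : p.HolderConjugate q) (ha : 0 < a) (hn : 0 < n) :
    a * (n * a ^ (-(1 / q))) + n ^ q * ((n * a ^ (-(1 / q))) ^ (1 - q) / (q - 1))
      = p * (n * a ^ (1 / p)) := by
  have hq := hpq.symm.ne_zero
  have hq1 := hpq.symm.sub_one_ne_zero
  obtain rfl := hpq.symm.conjugate_eq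
  have h1p : 1 / (q / (q - 1)) = 1 + -(1 / q) := by field_simp; ring
  have h1p' : 1 / (q / (q - 1)) = -(1 / q) * (1 - q) := by field_simp; ring
  have hT : (n * a ^ (-(1 / q))) ^ (1 - q) = n ^ (1 - q) * a ^ (1 / (q / (q - 1))) := by
    rw [Real.mul_rpow hn.le (by positivity), ← Real.rpow_mul ha.le, h1p']
  have hnq : n ^ q * n ^ (1 - q) = n := by
    rw [← Real.rpow_add hn, add_sub_cancel, Real.rpow_one]
  have haT : a * a ^ (-(1 / q)) = a ^ (1 / (q / (q - 1))) := by
    rw [h1p, Real.rpow_add ha, Real.rpow_one]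
  calc _ = n * (a * a ^ (-(1 / q)))
          + n ^ q * n ^ (1 - q) * a ^ (1 / (q / (q - 1))) / (q - 1) := by
        rw [hT]; ring
    _ = _ := by rw [haT, hnq]; field_simp; ring

lemma ofReal_div_ofReal_rpow {n t q : ℝ} (hn : 0 ≤ n) (ht : 0 < t) (hq : 0 ≤ q) :
    (ENNReal.ofReal n / ENNReal.ofReal t) ^ q = ENNReal.ofReal (n ^ q * t ^ (-q)) := by
  rw [← ENNReal.ofReal_div_of_pos ht, ENNReal.ofReal_rpow_of_nonneg (by positivity) hq,
    Real.div_rpow hn ht.le, Real.rpow_neg ht.le, div_eq_mul_inv]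

lemma lintegral_Ioi_min_ofReal_div_rpow_le {p q a n : ℝ} (hpq : p.HolderConjugate q)
    (ha : 0 < a) (hn : 0 < n) :
    ∫⁻ t in Ioi (0 : ℝ), min (ENNReal.ofReal a) ((ENNReal.ofReal n / ENNReal.ofReal t) ^ q)
      ≤ ENNReal.ofReal (p * (n * a ^ (1 / p))) := by
  have hq1 : 1 < q := hpq.symm.lt
  set T := n * a ^ (-(1 / q))
  have hT : 0 < T := by positivity
  rw [← Ioc_union_Ioi_eq_Ioi hT.le, lintegral_union measurableSet_Ioi (Ioc_disjoint_Ioi le_rfl),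
    ← optimal_truncation_eq hpq ha hn, ENNReal.ofReal_add (by positivity) (by positivity)]
  gcongr ?_ + ?_
  · calc _ ≤ ∫⁻ _ in Ioc 0 T, ENNReal.ofReal a := lintegral_mono fun _ => min_le_left _ _
      _ = _ := by
        rw [setLIntegral_const, Real.volume_Ioc, sub_zero, ← ENNReal.ofReal_mul ha.le]
  · calc _ ≤ ∫⁻ t in Ioi T, ENNReal.ofReal (n ^ q * t ^ (-q)) :=
          setLIntegral_mono (by fun_prop) fun t ht =>
            (min_le_right _ _).trans_eq (ofReal_div_ofReal_rpow hn.le (hT.trans ht) (by linarith))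
      _ = ENNReal.ofReal (∫ t in Ioi T, n ^ q * t ^ (-q)) := by
        refine (ofReal_integral_eq_lintegral_ofReal
          ((integrableOn_Ioi_rpow_of_lt (by linarith) hT).const_mul _) ?_).symm
        exact (ae_restrict_iff' measurableSet_Ioi).mpr
          (.of_forall fun t ht => by have := hT.trans ht; positivity)
      _ = _ := by
        rw [integral_const_mul, integral_Ioi_rpow_of_lt (by linarith) hT]
        congr 2
        rw [show -q + 1 = 1 - q by ring, neg_div, ← div_neg, neg_sub]

lemma exists_pos_eq_ofReal {x : ℝ≥0∞} (h0 : x ≠ 0) (htop : x ≠ ⊤) :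
    ∃ r : ℝ, 0 < r ∧ x = ENNReal.ofReal r :=
  ⟨x.toReal, ENNReal.toReal_pos h0 htop, (ENNReal.ofReal_toReal htop).symm⟩

lemma lintegral_Ioi_min_div_rpow_le {p q : ℝ} (hpq : p.HolderConjugate q) (A N : ℝ≥0∞) :
    ∫⁻ t in Ioi (0 : ℝ), min A ((N / ENNReal.ofReal t) ^ q)
      ≤ ENNReal.ofReal p * N * A ^ (1 / p) := by
  rcases eq_or_ne N 0 with rfl | hN0
  · simp [ENNReal.zero_rpow_of_pos hpq.symm.pos]
  rcases eq_or_ne A 0 with rfl | hA0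
  · simp
  by_cases htop : N = ⊤ ∨ A = ⊤
  · have hp : ENNReal.ofReal p ≠ 0 := by simpa using hpq.pos
    suffices ENNReal.ofReal p * N * A ^ (1 / p) = ⊤ by rw [this]; exact le_top
    rcases htop with rfl | rfl
    · rw [ENNReal.mul_top hp, ENNReal.top_mul
        (ENNReal.rpow_pos_of_nonneg (pos_iff_ne_zero.2 hA0) hpq.one_div_nonneg).ne']
    · rw [ENNReal.top_rpow_of_pos hpq.one_div_pos, ENNReal.mul_top (mul_ne_zero hp hN0)]
  push Not at htop
  obtain ⟨n, hn, rfl⟩ := exists_pos_eq_ofReal hN0 htop.1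
  obtain ⟨a, ha, rfl⟩ := exists_pos_eq_ofReal hA0 htop.2
  rw [ENNReal.ofReal_rpow_of_pos ha, mul_assoc, ← ENNReal.ofReal_mul hn.le,
    ← ENNReal.ofReal_mul hpq.nonneg]
  exact lintegral_Ioi_min_ofReal_div_rpow_le hpq ha hn

section WeakType

variable {X : Type*} [MeasurableSpace X] (μ : Measure X)

lemma measure_lt_abs_le_wkNormMu_div_rpow {q : ℝ} (hq : 0 < q) (g : X → ℝ) {t : ℝ} (ht : 0 < t) :
    μ {x | t < |g x|} ≤ (wkNormMu μ q g / ENNReal.ofReal t) ^ q := by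
  rw [← ENNReal.rpow_inv_le_iff hq, ← one_div,
    ENNReal.le_div_iff_mul_le (.inl (by simpa using ht)) (.inl ENNReal.ofReal_ne_top), mul_comm]
  exact le_iSup₂ (f := fun t (_ : 0 < t) => ENNReal.ofReal t * μ {x | t < |g x|} ^ (1 / q)) t ht

/-- Kolmogorov's inequality. -/
lemma setLIntegral_abs_le_wkNormMu {p q : ℝ} (hpq : p.HolderConjugate q) {g : X → ℝ} {E : Set X}
    (hg : AEMeasurable g (μ.restrict E)) :
    ∫⁻ x in E, ENNReal.ofReal |g x| ∂μ ≤ ENNReal.ofReal p * wkNormMu μ q g * μ E ^ (1 / p) := by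
  rw [lintegral_eq_lintegral_meas_lt _ (ae_of_all _ fun x => abs_nonneg (g x)) hg.abs]
  refine (setLIntegral_mono' measurableSet_Ioi fun t ht => ?_).trans
    (lintegral_Ioi_min_div_rpow_le hpq _ _)
  exact le_min ((measure_mono (subset_univ _)).trans_eq (Measure.restrict_apply_univ E))
    ((Measure.restrict_apply_le _ _).trans
      (measure_lt_abs_le_wkNormMu_div_rpow μ hpq.symm.pos g ht))

end WeakType

lemma div_rpow_mul_rpow_cancel {a b : ℝ≥0∞} (hb0 : b ≠ 0) (hbtop : b ≠ ⊤) {z : ℝ} (hz : 0 ≤ z) :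
    (a / b) ^ z * b ^ z = a ^ z := by
  rw [← ENNReal.mul_rpow_of_nonneg _ _ hz, ENNReal.div_mul_cancel hb0 hbtop]

lemma div_rpow_mul_self {p q : ℝ} (hpq : p.HolderConjugate q) {a b : ℝ≥0∞} (hb0 : b ≠ 0)
    (hbtop : b ≠ ⊤) : (a / b) ^ (1 / p) * b = a ^ (1 / p) * b ^ (1 / q) := by
  have hb : b = b ^ (1 / p) * b ^ (1 / q) := by
    rw [← ENNReal.rpow_add _ _ hb0 hbtop, hpq.one_div_add_one_div, one_div_one, ENNReal.rpow_one]
  calc (a / b) ^ (1 / p) * b = (a / b) ^ (1 / p) * b ^ (1 / p) * b ^ (1 / q) := by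
        rw [mul_assoc, ← hb]
    _ = a ^ (1 / p) * b ^ (1 / q) := by
        rw [div_rpow_mul_rpow_cancel hb0 hbtop hpq.one_div_nonneg]

section Weight

variable {n : ℕ} {p : ℝ} {w : (Fin n → ℝ) → ℝ}

lemma measurableSet_cube (c : Fin n → ℝ) (l : ℝ) : MeasurableSet (cube n c l) :=
  MeasurableSet.univ_pi fun _ => measurableSet_Ioo

lemma withDensity_ne_top_of_subset_cube (hwloc : LocallyIntegrable w volume)
    {c : Fin n → ℝ} {l : ℝ} {E : Set (Fin n → ℝ)} (hEQ : E ⊆ cube n c l) :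
    volume.withDensity (fun x => ENNReal.ofReal (w x)) E ≠ ⊤ := by
  have hbox : IsCompact (univ.pi fun i => Icc (c i) (c i + l)) :=
    isCompact_univ_pi fun _ => isCompact_Icc
  have hint : IntegrableOn w E volume := (hwloc.integrableOn_isCompact hbox).mono_set
    (hEQ.trans (pi_mono fun _ _ => Ioo_subset_Icc_self))
  rw [withDensity_apply' _ E]
  exact hint.lintegral_lt_top.ne

lemma le_ApRNorm {c : Fin n → ℝ} {l : ℝ} (hl : 0 < l) {E : Set (Fin n → ℝ)}
    (hEm : MeasurableSet E) (hEQ : E ⊆ cube n c l) (hE : 0 < volume E) :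
    volume E / volume (cube n c l) *
        (volume.withDensity (fun x => ENNReal.ofReal (w x)) (cube n c l) /
          volume.withDensity (fun x => ENNReal.ofReal (w x)) E) ^ (1 / p) ≤ ApRNorm n p w := by
  rw [withDensity_apply _ (measurableSet_cube c l), withDensity_apply _ hEm]
  exact le_iSup₂_of_le c l <| le_iSup₂_of_le hl E <| le_iSup₂_of_le hEm hEQ <|
    le_iSup_of_le hE le_rfl

lemma le_ApRConst (c : Fin n → ℝ) {l : ℝ} (hl : 0 < l) :
    volume.withDensity (fun x => ENNReal.ofReal (w x)) (cube n c l) ^ (1 / p) *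
        wkNormMu (volume.withDensity fun x => ENNReal.ofReal (w x)) (p / (p - 1))
          ((cube n c l).indicator fun x => (w x)⁻¹) / volume (cube n c l) ≤ ApRConst n p w :=
  le_iSup₂_of_le c l <| le_iSup_of_le hl le_rfl

lemma ofReal_mul_withDensity_le_volume {t : ℝ} (ht : 0 < t) {E : Set (Fin n → ℝ)}
    (hEm : MeasurableSet E) (hwE : ∀ x ∈ E, t < |(w x)⁻¹|) :
    ENNReal.ofReal t * volume.withDensity (fun x => ENNReal.ofReal (w x)) E ≤ volume E := by
  have hw : ∀ x ∈ E, ENNReal.ofReal (w x) ≤ ENNReal.ofReal t⁻¹ := fun x hx => by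
    have hx := hwE x hx
    rw [abs_inv] at hx
    have hpos : 0 < |w x| := inv_pos.1 (ht.trans hx)
    exact ENNReal.ofReal_le_ofReal ((le_abs_self _).trans ((lt_inv_comm₀ ht hpos).1 hx).le)
  calc ENNReal.ofReal t * volume.withDensity (fun x => ENNReal.ofReal (w x)) E
      ≤ ENNReal.ofReal t * ∫⁻ _ in E, ENNReal.ofReal t⁻¹ := by
        rw [withDensity_apply _ hEm]
        exact mul_le_mul_right (setLIntegral_mono' hEm hw) _
    _ = volume E := by
        rw [setLIntegral_const, ← mul_assoc, ← ENNReal.ofReal_mul ht.le, mul_inv_cancel₀ ht.ne',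
          ENNReal.ofReal_one, one_mul]

lemma volume_le_ofReal_mul_wkNormMu_mul (hp : 1 < p) (hwm : Measurable w) (hwp : ∀ x, 0 < w x)
    {Q E : Set (Fin n → ℝ)} (hQ : MeasurableSet Q) (hEm : MeasurableSet E) (hEQ : E ⊆ Q) :
    volume E ≤ ENNReal.ofReal p *
      wkNormMu (volume.withDensity fun x => ENNReal.ofReal (w x)) (p / (p - 1))
        (Q.indicator fun x => (w x)⁻¹) *
      volume.withDensity (fun x => ENNReal.ofReal (w x)) E ^ (1 / p) := by
  refine le_of_eq_of_le ?_ (setLIntegral_abs_le_wkNormMu _ (.conjExponent hp)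
    (hwm.inv.indicator hQ).aemeasurable)
  calc volume E = ∫⁻ x in E, ENNReal.ofReal (w x) * ENNReal.ofReal (w x)⁻¹ := by
        rw [← setLIntegral_one]
        refine setLIntegral_congr_fun hEm fun x _ => ?_
        rw [← ENNReal.ofReal_mul (hwp x).le, mul_inv_cancel₀ (hwp x).ne', ENNReal.ofReal_one]
    _ = ∫⁻ x in E, ENNReal.ofReal (w x)⁻¹ ∂volume.withDensity fun x => ENNReal.ofReal (w x) :=
        (setLIntegral_withDensity_eq_setLIntegral_mul _ hwm.ennreal_ofReal
          hwm.inv.ennreal_ofReal hEm).symm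
    _ = _ := setLIntegral_congr_fun hEm fun x hx => by
        rw [indicator_of_mem (hEQ hx), abs_of_pos (inv_pos.2 (hwp x))]

lemma rpow_mul_ofReal_mul_rpow_div_le_ApRNorm (hp : 1 < p) (hwm : Measurable w)
    (hwloc : LocallyIntegrable w volume) {c : Fin n → ℝ} {l : ℝ} (hl : 0 < l) {t : ℝ}
    (ht : 0 < t) :
    volume.withDensity (fun x => ENNReal.ofReal (w x)) (cube n c l) ^ (1 / p) *
        (ENNReal.ofReal t * volume.withDensity (fun x => ENNReal.ofReal (w x))
          {x | t < |(cube n c l).indicator (fun x => (w x)⁻¹) x|} ^ (1 / (p / (p - 1)))) /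
      volume (cube n c l) ≤ ApRNorm n p w := by
  set ν := volume.withDensity fun x => ENNReal.ofReal (w x)
  set E := {x | t < |(cube n c l).indicator (fun x => (w x)⁻¹) x|}
  have hEQ : E ⊆ cube n c l := fun x hx => by
    by_contra hxQ
    simp only [E, mem_ofPred_eq, indicator_of_notMem hxQ, abs_zero] at hx
    exact hx.not_gt ht
  have hEm : MeasurableSet E :=
    measurableSet_lt measurable_const (hwm.inv.indicator (measurableSet_cube c l)).abs
  have htE : ENNReal.ofReal t * ν E ≤ volume E := ofReal_mul_withDensity_le_volume ht hEm
    fun x hx => by simpa only [E, mem_ofPred_eq, indicator_of_mem (hEQ hx)] using hx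
  have hpq : p.HolderConjugate (p / (p - 1)) := .conjExponent hp
  rcases eq_or_ne (ν E) 0 with hνE | hνE
  · rw [hνE, ENNReal.zero_rpow_of_pos hpq.symm.one_div_pos, mul_zero, mul_zero, ENNReal.zero_div]
    exact zero_le
  have hvol : 0 < volume E :=
    (ENNReal.mul_pos (by simpa using ht) hνE).trans_le htE
  refine le_trans ?_ (le_ApRNorm hl hEm hEQ hvol)
  rw [← ENNReal.mul_div_right_comm]
  refine ENNReal.div_le_div_right ?_ _
  calc ν (cube n c l) ^ (1 / p) * (ENNReal.ofReal t * ν E ^ (1 / (p / (p - 1))))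
      = ENNReal.ofReal t * ν E * (ν (cube n c l) / ν E) ^ (1 / p) := by
        rw [mul_assoc, mul_comm (ν E),
          div_rpow_mul_self hpq hνE (withDensity_ne_top_of_subset_cube hwloc hEQ)]
        ring
    _ ≤ volume E * (ν (cube n c l) / ν E) ^ (1 / p) := by gcongr

lemma div_mul_rpow_div_le_ofReal_mul_ApRConst (hp : 1 < p) (hwm : Measurable w)
    (hwp : ∀ x, 0 < w x) (hwloc : LocallyIntegrable w volume) {c : Fin n → ℝ} {l : ℝ}
    (hl : 0 < l) {E : Set (Fin n → ℝ)} (hEm : MeasurableSet E) (hEQ : E ⊆ cube n c l)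
    (hE : 0 < volume E) :
    volume E / volume (cube n c l) *
        ((∫⁻ x in cube n c l, ENNReal.ofReal (w x)) / ∫⁻ x in E, ENNReal.ofReal (w x)) ^ (1 / p)
      ≤ ENNReal.ofReal p * ApRConst n p w := by
  set ν := volume.withDensity fun x => ENNReal.ofReal (w x)
  set N := wkNormMu ν (p / (p - 1)) ((cube n c l).indicator fun x => (w x)⁻¹)
  rw [← withDensity_apply _ (measurableSet_cube c l), ← withDensity_apply _ hEm]
  have hK : volume E ≤ ENNReal.ofReal p * N * ν E ^ (1 / p) :=
    volume_le_ofReal_mul_wkNormMu_mul hp hwm hwp (measurableSet_cube c l) hEm hEQ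
  have hνE : ν E ≠ 0 := fun h => by
    rw [h, ENNReal.zero_rpow_of_pos (by positivity), mul_zero] at hK
    exact hE.ne' (le_zero_iff.1 hK)
  refine le_trans ?_ (mul_le_mul_right (le_ApRConst c hl) _)
  rw [← ENNReal.mul_div_right_comm, ← mul_div_assoc]
  refine ENNReal.div_le_div_right ?_ _
  calc volume E * (ν (cube n c l) / ν E) ^ (1 / p)
      ≤ ENNReal.ofReal p * N * ν E ^ (1 / p) * (ν (cube n c l) / ν E) ^ (1 / p) := by gcongr
    _ = ENNReal.ofReal p * (ν (cube n c l) ^ (1 / p) * N) := by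
        rw [mul_assoc, mul_comm (ν E ^ (1 / p)),
          div_rpow_mul_rpow_cancel hνE (withDensity_ne_top_of_subset_cube hwloc hEQ)
            (by positivity)]
        ring

lemma ApRConst_le_ApRNorm (hp : 1 < p) (hwm : Measurable w)
    (hwloc : LocallyIntegrable w volume) : ApRConst n p w ≤ ApRNorm n p w := by
  refine iSup₂_le fun c l => iSup_le fun hl => ?_
  simp only [wkNormMu, ENNReal.mul_iSup, ENNReal.iSup_div]
  exact iSup₂_le fun t ht => rpow_mul_ofReal_mul_rpow_div_le_ApRNorm hp hwm hwloc hl ht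

lemma ApRNorm_le_ofReal_mul_ApRConst (hp : 1 < p) (hwm : Measurable w) (hwp : ∀ x, 0 < w x)
    (hwloc : LocallyIntegrable w volume) : ApRNorm n p w ≤ ENNReal.ofReal p * ApRConst n p w :=
  iSup₂_le fun _ _ => iSup₂_le fun hl _ => iSup₂_le fun hEm hEQ => iSup_le fun hE =>
    div_mul_rpow_div_le_ofReal_mul_ApRConst hp hwm hwp hwloc hl hEm hEQ hE

end Weight

/-- for `1 < p < ∞` and a weight `w`,
`[w]_{A_p^𝓡} ≤ ‖w‖_{A_p^𝓡} ≤ p [w]_{A_p^𝓡}`. -/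
theorem stmt9 (n : ℕ) (p : ℝ) (hp : 1 < p)
    (w : (Fin n → ℝ) → ℝ) (hwm : Measurable w) (hwp : ∀ x, 0 < w x)
    (hwloc : LocallyIntegrable w volume) :
    ApRConst n p w ≤ ApRNorm n p w ∧ ApRNorm n p w ≤ ENNReal.ofReal p * ApRConst n p w :=
  ⟨ApRConst_le_ApRNorm hp hwm hwloc, ApRNorm_le_ofReal_mul_ApRConst hp hwm hwp hwloc⟩
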